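/- arXiv:1711.06783 — 6 statements merged into one kernel-verified Lean document; each statement's English description precedes it below -/
import Mathlib

section
/- Let (G_a, G_b) ~ ER(n, p), let π be a permutation of [n], let τ = l(π), and let t̃ be the number of unordered vertex pairs e with τ(e) ≠ e. Then E[δ(τ; G_a, G_b)] = t̃·(p00·p11 − p01·p10). -/
/-
Write `δ(τ; f, g)` as half the sum over pairs `e` of `[f(τ e) ≠ g(e)] - [f(e) ≠ g(e)]`.
The terms with `τ e = e` vanish. For `τ e ≠ e` the labels `(G_a, G_b)(τ e)` and `(G_a, G_b)(e)`
are independent with law `p`, so the expected term is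
`((p₁₁ + p₁₀)(p₁₀ + p₀₀) + (p₀₁ + p₀₀)(p₁₁ + p₀₁) - (p₁₀ + p₀₁)(p₁₁ + p₁₀ + p₀₁ + p₀₀)) / 2`,
which is `p₀₀ p₁₁ - p₀₁ p₁₀`.
-/

open Finset

/-- Unordered pairs of distinct vertices of `[n]`. -/
abbrev VPairs (n : ℕ) := {e : Sym2 (Fin n) // ¬ e.IsDiag}

/-- A graph on `[n]`, identified with its edge-indicator function. -/
abbrev LGraph (n : ℕ) := VPairs n → Bool

/-- The permutation of vertex pairs induced by a permutation of vertices. -/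
def pairPerm {n : ℕ} (π : Equiv.Perm (Fin n)) : Equiv.Perm (VPairs n) where
  toFun e := ⟨e.val.map π, fun h => e.prop ((Sym2.isDiag_map π.injective).mp h)⟩
  invFun e := ⟨e.val.map π.symm, fun h => e.prop ((Sym2.isDiag_map π.symm.injective).mp h)⟩
  left_inv e := by
    ext1
    simp [Sym2.map_map]
  right_inv e := by
    ext1
    simp [Sym2.map_map]

/-- Hamming distance between two labelings. -/
def hamming {S : Type*} [Fintype S] [DecidableEq S] (f g : S → Bool) : ℕ :=
  (Finset.univ.filter fun e => f e ≠ g e).card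

/-- `δ(τ; f, g) = (Δ(f∘τ, g) − Δ(f, g))/2`, as a rational number. -/
def deltaQ {S : Type*} [Fintype S] [DecidableEq S] (τ : Equiv.Perm S) (f g : S → Bool) : ℚ :=
  (((hamming (f ∘ τ) g : ℚ)) - (hamming f g : ℚ)) / 2

/-- The entry `(i,j)` of the type `μ(f,g)`. -/
def typeCount {S : Type*} [Fintype S] [DecidableEq S] (f g : S → Bool) (i j : Bool) : ℕ :=
  (Finset.univ.filter fun e => f e = i ∧ g e = j).card

/-- The joint edge distribution determined by a probability vector. -/
def pv (p11 p10 p01 p00 : ℝ) : Bool → Bool → ℝ :=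
  fun a b => if a then (if b then p11 else p10) else (if b then p01 else p00)

open Classical in
/-- The probability of an event under the correlated Erdős–Rényi model `ER(n,p)`. -/
noncomputable def ERprob (n : ℕ) (p : Bool → Bool → ℝ)
    (E : LGraph n × LGraph n → Prop) : ℝ :=
  ∑ gab : LGraph n × LGraph n,
    (if E gab then (1 : ℝ) else 0) * ∏ e : VPairs n, p (gab.1 e) (gab.2 e)

open Classical in
/-- The probability of an event under the joint distribution of a uniformly random
permutation `Π` of `[n]` together with `(G_a, G_b) ~ ER(n,p)` independent of it. -/
noncomputable def ERPermProb (n : ℕ) (p : Bool → Bool → ℝ)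
    (E : Equiv.Perm (Fin n) → LGraph n × LGraph n → Prop) : ℝ :=
  (∑ π : Equiv.Perm (Fin n), ∑ gab : LGraph n × LGraph n,
    (if E π gab then (1 : ℝ) else 0) * ∏ e : VPairs n, p (gab.1 e) (gab.2 e))
    / (Nat.factorial n)

/-- The anonymized graph `G_c`, determined by `G_c(l(Π)(e)) = G_a(e)`. -/
def anonymize {n : ℕ} (π : Equiv.Perm (Fin n)) (ga : LGraph n) : LGraph n :=
  fun e => ga ((pairPerm π).symm e)

/-- `S_{n,nt}`: the permutations of `[n]` with exactly `nt` non-fixed points. -/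
def Snn (n nt : ℕ) : Finset (Equiv.Perm (Fin n)) :=
  Finset.univ.filter fun π => (Finset.univ.filter fun x => π x ≠ x).card = nt

open Classical in
/-- The generating function `A_{S,τ}(w,z)`; here `z^δ` is expressed as `√z^(2δ)`. -/
noncomputable def AgF {S : Type*} [Fintype S] (τ : Equiv.Perm S)
    (w : Bool → Bool → ℝ) (z : ℝ) : ℝ :=
  ∑ g : S → Bool, ∑ h : S → Bool,
    (Real.sqrt z) ^ ((hamming (g ∘ τ) h : ℤ) - (hamming g h : ℤ)) *
      ∏ i : Bool, ∏ j : Bool, w i j ^ typeCount g h i j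

/-- `a_ℓ(w,z)`: the generating function of a single cycle of length `ℓ`. -/
noncomputable def aGF (ℓ : ℕ) (w : Bool → Bool → ℝ) (z : ℝ) : ℝ :=
  AgF (finRotate ℓ) w z

open Classical in
/-- The number of cycles of length `ℓ` in the cycle decomposition of `τ`
(the number of points whose `τ`-orbit has size `ℓ`, divided by `ℓ`). -/
noncomputable def cycleCount {S : Type*} [Fintype S] (τ : Equiv.Perm S) (ℓ : ℕ) : ℕ :=
  (Finset.univ.filter fun x : S =>
    (Finset.univ.filter fun y : S => τ.SameCycle x y).card = ℓ).card / ℓ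

open Classical in
/-- The probability of an event under an Erdős–Rényi graph `G(n,p)`. -/
noncomputable def ERgraphProb (n : ℕ) (p : ℝ) (E : LGraph n → Prop) : ℝ :=
  ∑ g : LGraph n,
    (if E g then (1 : ℝ) else 0) * ∏ e : VPairs n, (if g e then p else 1 - p)

open Classical in
/-- The number of automorphisms of a graph. -/
noncomputable def autCard {n : ℕ} (g : LGraph n) : ℕ :=
  (Finset.univ.filter fun π : Equiv.Perm (Fin n) =>
    ∀ e : VPairs n, g (pairPerm π e) = g e).card

section PiExpect

variable {S γ : Type*} [Fintype S] [DecidableEq S] [Fintype γ] {q : γ → ℝ}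

noncomputable def piExpect (q : γ → ℝ) (Φ : (S → γ) → ℝ) : ℝ :=
  ∑ u, Φ u * ∏ i, q (u i)

theorem piExpect_const (hq : ∑ c, q c = 1) (a : ℝ) : piExpect q (fun _ : S → γ => a) = a := by
  rw [piExpect, ← mul_sum, ← Fintype.prod_sum fun _ => q]
  simp [hq]

theorem piExpect_split (e : S) (Φ : γ → ({j // j ≠ e} → γ) → ℝ) :
    piExpect q (fun u => Φ (u e) (fun j => u j)) = ∑ c, q c * piExpect q (Φ c) := by
  rw [piExpect, ← (Equiv.funSplitAt e γ).symm.sum_comp, Fintype.sum_prod_type]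
  refine sum_congr rfl fun c _ => ?_
  rw [piExpect, mul_sum]
  refine sum_congr rfl fun v _ => ?_
  rw [Fintype.prod_eq_mul_prod_subtype_ne _ e]
  have hv (j : {j // j ≠ e}) : (Equiv.funSplitAt e γ).symm (c, v) j = v j := dif_neg j.2
  simp only [hv, Equiv.funSplitAt_symm_apply, dite_true]
  ring

theorem piExpect_apply (hq : ∑ c, q c = 1) (e : S) (F : γ → ℝ) :
    piExpect q (fun u => F (u e)) = ∑ c, F c * q c := by
  rw [piExpect_split e fun c _ => F c]
  simp only [piExpect_const hq, mul_comm]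

theorem piExpect_apply₂ (hq : ∑ c, q c = 1) {e₁ e₂ : S} (h : e₁ ≠ e₂) (F : γ → γ → ℝ) :
    piExpect q (fun u => F (u e₁) (u e₂)) = ∑ c, ∑ d, F c d * (q c * q d) := by
  rw [piExpect_split e₁ fun c v => F c (v ⟨e₂, h.symm⟩)]
  simp only [piExpect_apply hq, mul_sum]
  refine sum_congr rfl fun c _ => sum_congr rfl fun d _ => ?_
  ring

theorem piExpect_sum {ι : Type*} (s : Finset ι) (Φ : ι → (S → γ) → ℝ) :
    piExpect q (fun u => ∑ k ∈ s, Φ k u) = ∑ k ∈ s, piExpect q (Φ k) := by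
  simp only [piExpect, sum_mul]
  exact sum_comm

theorem sum_prod_eq_piExpect {α β : Type*} [Fintype α] [Fintype β] (w : α → β → ℝ)
    (Φ : (S → α) × (S → β) → ℝ) :
    ∑ fg : (S → α) × (S → β), Φ fg * ∏ e, w (fg.1 e) (fg.2 e) =
      piExpect (Function.uncurry w) (fun u => Φ (fun e => (u e).1, fun e => (u e).2)) := by
  rw [piExpect, ← (Equiv.arrowProdEquivProdArrow S (fun _ => α) (fun _ => β)).sum_comp]
  rfl

end PiExpect

section Mismatch

variable {S : Type*} [Fintype S] [DecidableEq S]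

theorem hamming_eq_sum (f g : S → Bool) :
    (hamming f g : ℝ) = ∑ e, if f e ≠ g e then 1 else 0 := by
  rw [hamming, card_filter]
  push_cast
  rfl

theorem deltaQ_eq_sum (τ : Equiv.Perm S) (f g : S → Bool) :
    (deltaQ τ f g : ℝ) =
      ∑ e, ((if f (τ e) ≠ g e then 1 else 0) - (if f e ≠ g e then 1 else 0)) / 2 := by
  rw [deltaQ]
  push_cast
  rw [hamming_eq_sum, hamming_eq_sum, ← sum_div, ← sum_sub_distrib]
  rfl

end Mismatch

section CorrelatedPairs

variable {S : Type*} [Fintype S] [DecidableEq S] {w : Bool → Bool → ℝ}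

theorem piExpect_mismatch_shift (hw : ∑ c, Function.uncurry w c = 1) {e₁ e₂ : S} (h : e₁ ≠ e₂) :
    piExpect (Function.uncurry w) (fun u =>
        ((if (u e₁).1 ≠ (u e₂).2 then 1 else 0) - (if (u e₂).1 ≠ (u e₂).2 then 1 else 0)) / 2)
      = w false false * w true true - w false true * w true false := by
  rw [piExpect_apply₂ hw h fun c d =>
    ((if c.1 ≠ d.2 then 1 else 0) - (if d.1 ≠ d.2 then 1 else 0)) / 2]
  simp only [Fintype.sum_prod_type, Fintype.sum_bool, Function.uncurry_apply_pair, ne_eq,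
    Bool.true_eq_false, Bool.false_eq_true, not_true, not_false_eq_true, if_true, if_false]
  ring

theorem sum_deltaQ_mul_prod (hw : ∑ c, Function.uncurry w c = 1) (τ : Equiv.Perm S) :
    ∑ fg : (S → Bool) × (S → Bool), (deltaQ τ fg.1 fg.2 : ℝ) * ∏ e, w (fg.1 e) (fg.2 e)
      = #{e | τ e ≠ e} * (w false false * w true true - w false true * w true false) := by
  have edge (e : S) : piExpect (Function.uncurry w) (fun u =>
        ((if (u (τ e)).1 ≠ (u e).2 then 1 else 0) - (if (u e).1 ≠ (u e).2 then 1 else 0)) / 2)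
      = if τ e ≠ e then w false false * w true true - w false true * w true false else 0 := by
    split_ifs with h
    · exact piExpect_mismatch_shift hw h
    · simp [not_not.mp h, piExpect]
  rw [sum_prod_eq_piExpect]
  simp only [deltaQ_eq_sum, piExpect_sum, edge, ← sum_filter, sum_const, nsmul_eq_mul]

end CorrelatedPairs

theorem sum_uncurry_pv {p11 p10 p01 p00 : ℝ} (hsum : p11 + p10 + p01 + p00 = 1) :
    ∑ c, Function.uncurry (pv p11 p10 p01 p00) c = 1 := by
  simp only [Fintype.sum_prod_type, Fintype.sum_bool, Function.uncurry_apply_pair, pv,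
    Bool.false_eq_true, if_true, if_false]
  linarith

theorem expectation_delta_general
    (n : ℕ) (p11 p10 p01 p00 : ℝ)
    (hsum : p11 + p10 + p01 + p00 = 1)
    (π : Equiv.Perm (Fin n)) :
    ∑ gab : LGraph n × LGraph n,
        ((deltaQ (pairPerm π) gab.1 gab.2 : ℚ) : ℝ) *
          ∏ e : VPairs n, pv p11 p10 p01 p00 (gab.1 e) (gab.2 e)
      = ((Finset.univ.filter fun e : VPairs n => pairPerm π e ≠ e).card : ℝ) *
          (p00 * p11 - p01 * p10) :=
  sum_deltaQ_mul_prod (sum_uncurry_pv hsum) (pairPerm π)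

/-- the expected value of `δ(τ; G_a, G_b)`. -/
theorem expectation_delta
    (n : ℕ) (p11 p10 p01 p00 : ℝ)
    (hpos : 0 ≤ p11 ∧ 0 ≤ p10 ∧ 0 ≤ p01 ∧ 0 ≤ p00)
    (hsum : p11 + p10 + p01 + p00 = 1)
    (π : Equiv.Perm (Fin n)) :
    ∑ gab : LGraph n × LGraph n,
        ((deltaQ (pairPerm π) gab.1 gab.2 : ℚ) : ℝ) *
          ∏ e : VPairs n, pv p11 p10 p01 p00 (gab.1 e) (gab.2 e)
      = ((Finset.univ.filter fun e : VPairs n => pairPerm π e ≠ e).card : ℝ) *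
          (p00 * p11 - p01 * p10) :=
  expectation_delta_general n p11 p10 p01 p00 hsum π
end

section
/- Let w be a 2×2 matrix of positive reals and let z > 0 be real. Then for every integer ℓ ≥ 2, a_ℓ(w, z) ≤ a_2(w, z)^{ℓ/2}, where a_2(w, z) = (w00 + w01 + w10 + w11)² + 2·w00·w11·(z − 1) + 2·w01·w10·(z⁻¹ − 1). -/
open Finset

/-!
Reading `A_{S,τ}` site by site, the weight of a pair `(g, h)` is a product over `e ∈ S` of a
factor depending only on `g e`, `h e` and `g (τ e)`. Summing out `h` leaves a product of entries
`T (g e) (g (τ e))` of a `2 × 2` transfer matrix `T`, and for the `ℓ`-cycle the sum over `g` is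
`trace (T ^ ℓ) = x ^ ℓ + y ^ ℓ`, where `x, y` are the eigenvalues of `T`. They are real because
the off-diagonal entries of `T` are positive, so `x ^ ℓ + y ^ ℓ ≤ (x ^ 2 + y ^ 2) ^ (ℓ / 2)`
by superadditivity of `t ↦ t ^ (ℓ / 2)` on `[0, ∞)`.
-/

open Matrix

section Labelings

variable {S M : Type*} [Fintype S] [DecidableEq S] [CommMonoid M]

lemma pow_hamming (x : M) (f g : S → Bool) :
    x ^ hamming f g = ∏ e, if f e ≠ g e then x else 1 := by
  rw [hamming, prod_ite, prod_const_one, mul_one, prod_const]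

lemma prod_pow_typeCount (w : Bool → Bool → M) (f g : S → Bool) :
    ∏ i, ∏ j, w i j ^ typeCount f g i j = ∏ e, w (f e) (g e) := by
  rw [← prod_fiberwise univ (fun e => (f e, g e)), Fintype.prod_prod_type]
  refine prod_congr rfl fun i _ => prod_congr rfl fun j _ => ?_
  rw [typeCount, ← prod_const]
  refine prod_congr (by simp [Prod.ext_iff]) fun e he => ?_
  obtain ⟨rfl, rfl⟩ := (mem_filter.mp he).2
  rfl

end Labelings

/-- Entry `(a, a')` is the total weight of a site `e` with `g e = a` and `g (τ e) = a'`, summed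
over `b = h e`: the site contributes `√z ^ ([a' ≠ b] - [a ≠ b])` to `z ^ δ` and `w a b` to the
product over the type. -/
noncomputable def transferMatrix (w : Bool → Bool → ℝ) (z : ℝ) : Matrix Bool Bool ℝ :=
  Matrix.of fun a a' => ∑ b, (if a' ≠ b then √z else 1) / (if a ≠ b then √z else 1) * w a b

open Classical in
lemma AgF_eq_sum_prod_transferMatrix {S : Type*} [Fintype S] (τ : Equiv.Perm S)
    (w : Bool → Bool → ℝ) {z : ℝ} (hz : 0 < z) :
    AgF τ w z = ∑ g : S → Bool, ∏ e, transferMatrix w z (g e) (g (τ e)) := by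
  have hs : √z ≠ 0 := (Real.sqrt_pos.mpr hz).ne'
  refine sum_congr rfl fun g _ => ?_
  simp only [transferMatrix, of_apply, Fintype.prod_sum]
  refine sum_congr rfl fun h _ => ?_
  rw [zpow_sub₀ hs, zpow_natCast, zpow_natCast, pow_hamming, pow_hamming, prod_pow_typeCount,
    ← prod_div_distrib, ← prod_mul_distrib]
  rfl

section TracePow

variable {ι R : Type*} [Fintype ι] [DecidableEq ι] [CommSemiring R]

lemma sum_prod_path_mul_eq_trace_pow_mul (M N : Matrix ι ι R) (n : ℕ) :
    ∑ g : Fin (n + 1) → ι, (∏ i : Fin n, M (g i.castSucc) (g i.succ)) * N (g (Fin.last n)) (g 0)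
      = trace (M ^ n * N) := by
  induction n generalizing N with
  | zero =>
    simp [trace, ← (Equiv.funUnique (Fin 1) ι).symm.sum_comp]
  | succ n ih =>
    rw [← (Fin.consEquiv fun _ => ι).sum_comp, Fintype.sum_prod_type, sum_comm, pow_succ',
      mul_assoc, trace_mul_comm, mul_assoc, ← ih]
    refine sum_congr rfl fun g _ => ?_
    simp only [Fin.consEquiv_apply, Fin.prod_univ_succ, Fin.cons_zero, Fin.cons_succ,
      Fin.castSucc_zero, ← Fin.succ_castSucc, ← Fin.succ_last, mul_apply, mul_sum]
    exact sum_congr rfl fun a _ => by ring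

lemma sum_prod_cycle_eq_trace_pow (M : Matrix ι ι R) (n : ℕ) :
    ∑ g : Fin (n + 1) → ι, ∏ i, M (g i) (g (finRotate (n + 1) i)) = trace (M ^ (n + 1)) := by
  rw [pow_succ, ← sum_prod_path_mul_eq_trace_pow_mul]
  refine sum_congr rfl fun g _ => ?_
  rw [Fin.prod_univ_castSucc, finRotate_last]
  simp only [finRotate_apply, Fin.coeSucc_eq_succ]

end TracePow

lemma aGF_succ_eq_trace_pow (w : Bool → Bool → ℝ) {z : ℝ} (hz : 0 < z) (n : ℕ) :
    aGF (n + 1) w z = trace (transferMatrix w z ^ (n + 1)) := by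
  rw [aGF, AgF_eq_sum_prod_transferMatrix _ w hz, ← sum_prod_cycle_eq_trace_pow]
  -- the two sums differ only in the `DecidableEq (Fin (n + 1))` instance behind `univ`
  congr!

namespace Matrix

section CardTwo

variable {n R : Type*} [Fintype n] [DecidableEq n] [CommRing R] [Nontrivial R]

open Polynomial in
lemma sq_eq_trace_smul_sub_det_smul (M : Matrix n n R) (hn : Fintype.card n = 2) :
    M ^ 2 = M.trace • M - M.det • 1 := by
  have h := M.aeval_self_charpoly
  rw [M.charpoly_of_card_eq_two hn, map_add, map_sub, map_pow, map_mul, aeval_X, aeval_C, aeval_C,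
    Algebra.algebraMap_eq_smul_one, Algebra.algebraMap_eq_smul_one, smul_mul_assoc,
    one_mul] at h
  rw [← sub_eq_zero, ← h]
  abel

lemma trace_pow_eq_add_pow (M : Matrix n n R) (hn : Fintype.card n = 2) {x y : R}
    (hsum : x + y = M.trace) (hprod : x * y = M.det) (k : ℕ) :
    trace (M ^ k) = x ^ k + y ^ k := by
  induction k using Nat.twoStepInduction with
  | zero =>
    rw [pow_zero, trace_one, hn, pow_zero, pow_zero]
    norm_num
  | one => simp [hsum]
  | more k ih₀ ih₁ =>
    rw [pow_add, sq_eq_trace_smul_sub_det_smul M hn, mul_sub, mul_smul_comm, mul_smul_comm,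
      mul_one, ← pow_succ, trace_sub, trace_smul, trace_smul, ih₀, ih₁, ← hsum, ← hprod]
    simp only [smul_eq_mul]
    ring

end CardTwo

lemma det_bool {R : Type*} [CommRing R] (M : Matrix Bool Bool R) :
    M.det = M false false * M true true - M false true * M true false := by
  rw [← det_submatrix_equiv_self finTwoEquiv, det_fin_two]
  rfl

lemma exists_add_eq_trace_mul_eq_det (M : Matrix Bool Bool ℝ)
    (h : 0 ≤ M false true * M true false) : ∃ x y, x + y = M.trace ∧ x * y = M.det := by
  have hdiscr : 0 ≤ discrim 1 (-M.trace) M.det := by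
    rw [discrim, trace, Fintype.sum_bool, det_bool, diag_apply, diag_apply]
    nlinarith [sq_nonneg (M true true - M false false)]
  obtain ⟨x, hx⟩ := exists_quadratic_eq_zero one_ne_zero ⟨_, (Real.mul_self_sqrt hdiscr).symm⟩
  exact ⟨x, M.trace - x, by ring, by linear_combination -hx⟩

end Matrix

lemma transferMatrix_nonneg {w : Bool → Bool → ℝ} (hw : ∀ i j, 0 ≤ w i j) (z : ℝ) (a a' : Bool) :
    0 ≤ transferMatrix w z a a' := by
  rw [transferMatrix, of_apply]
  exact sum_nonneg fun b _ => mul_nonneg (by positivity) (hw a b)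

lemma trace_transferMatrix_sq (w : Bool → Bool → ℝ) {z : ℝ} (hz : 0 < z) :
    trace (transferMatrix w z ^ 2)
      = (w false false + w false true + w true false + w true true) ^ 2
        + 2 * w false false * w true true * (z - 1)
        + 2 * w false true * w true false * (z⁻¹ - 1) := by
  have hs : √z ≠ 0 := (Real.sqrt_pos.mpr hz).ne'
  have hsq : √z ^ 2 = z := Real.sq_sqrt hz.le
  simp only [sq, trace, diag_apply, mul_apply, transferMatrix, of_apply, Fintype.sum_bool, ne_eq,
    not_true_eq_false, ↓reduceIte, Bool.true_eq_false, Bool.false_eq_true, not_false_eq_true,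
    div_one, one_div]
  field_simp
  rw [hsq]
  ring

lemma pow_add_pow_le_rpow_sq_add_sq (x y : ℝ) {n : ℕ} (hn : 2 ≤ n) :
    x ^ n + y ^ n ≤ (x ^ 2 + y ^ 2) ^ ((n : ℝ) / 2) := by
  have pow_le (t : ℝ) : t ^ n ≤ (t ^ 2) ^ ((n : ℝ) / 2) := by
    calc t ^ n ≤ |t| ^ n := (le_abs_self _).trans (abs_pow t n).le
      _ = (t ^ 2) ^ ((n : ℝ) / 2) := by
        rw [← sq_abs, ← Real.rpow_natCast, ← Real.rpow_natCast _ 2,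
          ← Real.rpow_mul (abs_nonneg t)]
        ring_nf
  calc x ^ n + y ^ n ≤ (x ^ 2) ^ ((n : ℝ) / 2) + (y ^ 2) ^ ((n : ℝ) / 2) :=
        add_le_add (pow_le x) (pow_le y)
    _ ≤ (x ^ 2 + y ^ 2) ^ ((n : ℝ) / 2) :=
        Real.add_rpow_le_rpow_add (sq_nonneg x) (sq_nonneg y) (by
          rw [le_div_iff₀ two_pos, one_mul]; exact_mod_cast hn)

/-- `a_ℓ(w,z) ≤ a_2(w,z)^{ℓ/2}` for `ℓ ≥ 2`. -/
theorem aGF_le_aGF_two_pow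
    (w : Bool → Bool → ℝ) (hw : ∀ i j, 0 < w i j) (z : ℝ) (hz : 0 < z)
    (ℓ : ℕ) (hℓ : 2 ≤ ℓ) :
    aGF 2 w z
      = (w false false + w false true + w true false + w true true) ^ 2
        + 2 * w false false * w true true * (z - 1)
        + 2 * w false true * w true false * (z⁻¹ - 1) ∧
    aGF ℓ w z ≤ aGF 2 w z ^ ((ℓ : ℝ) / 2) := by
  set T := transferMatrix w z
  have hT := transferMatrix_nonneg (fun i j => (hw i j).le) z
  obtain ⟨x, y, hsum, hprod⟩ :=
    T.exists_add_eq_trace_mul_eq_det (mul_nonneg (hT false true) (hT true false))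
  have haGF (n : ℕ) : aGF (n + 1) w z = x ^ (n + 1) + y ^ (n + 1) := by
    rw [aGF_succ_eq_trace_pow w hz, T.trace_pow_eq_add_pow Fintype.card_bool hsum hprod]
  refine ⟨(aGF_succ_eq_trace_pow w hz 1).trans (trace_transferMatrix_sq w hz), ?_⟩
  obtain ⟨n, rfl⟩ : ∃ n, ℓ = n + 1 := ⟨ℓ - 1, by omega⟩
  rw [haGF, haGF 1]
  exact pow_add_pow_le_rpow_sq_add_sq x y hℓ
end

section
/- For all natural numbers a, b, n with 1 ≤ n, a ≤ n and b ≤ n, and all real z > 0: Σ_{ℓ=0}^{min(a,b)} (C(a,ℓ)·C(n−a, b−ℓ)/C(n,b))·z^ℓ ≤ (1 − b/n + (b/n)·z)^a, where C(·,·) denotes the binomial coefficient. That is, the probability generating function of the hypergeometric distribution Hyp(a,b,n) is bounded by that of the binomial distribution with a trials and success probability b/n. -/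
open Finset

/-!
The numerator is the coefficient of `x ^ b` in `(1 + z x) ^ a (1 + x) ^ (n - a)`. For `z ≥ 1` expand
`1 + z x = (z - 1) x + (1 + x)`, for `z ≤ 1` expand `1 + z x = (1 - z) + z (1 + x)`: both turn the
hypergeometric generating function into a binomial sum with nonnegative weights whose `k`-th
coefficient is a factorial moment, `C(n-k, b-k) / C(n, b) = (b)_k / (n)_k ≤ (b/n) ^ k`, resp.
`C(n-k, b) / C(n, b) ≤ (1 - b/n) ^ k`. The same expansions of `(1 - b/n + (b/n) z) ^ a` carry exactly
these powers in place of the factorial moments.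
-/

open Polynomial

theorem Nat.descFactorial_mul_pow_le_descFactorial_mul_pow {b n : ℕ} (h : b ≤ n) (k : ℕ) :
    b.descFactorial k * n ^ k ≤ n.descFactorial k * b ^ k := by
  simp only [Nat.descFactorial_eq_prod_range, pow_eq_prod_const, ← prod_mul_distrib]
  refine prod_le_prod' fun i _ => ?_
  rw [Nat.sub_mul, Nat.sub_mul, mul_comm b n]
  exact Nat.sub_le_sub_left (Nat.mul_le_mul_left i h) _

theorem Nat.choose_sub_mul_pow_le {k b n : ℕ} (hkb : k ≤ b) (hbn : b ≤ n) :
    (n - k).choose (b - k) * n ^ k ≤ n.choose b * b ^ k := by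
  have hchoose : n.choose b * b.descFactorial k = n.descFactorial k * (n - k).choose (b - k) := by
    rw [Nat.descFactorial_eq_factorial_mul_choose, Nat.descFactorial_eq_factorial_mul_choose,
      mul_left_comm, Nat.choose_mul hkb, mul_assoc]
  refine Nat.le_of_mul_le_mul_left ?_ (Nat.descFactorial_pos.mpr (hkb.trans hbn))
  calc n.descFactorial k * ((n - k).choose (b - k) * n ^ k)
      = n.choose b * (b.descFactorial k * n ^ k) := by rw [← mul_assoc, ← hchoose, mul_assoc]
    _ ≤ n.choose b * (n.descFactorial k * b ^ k) :=
        Nat.mul_le_mul_left _ (Nat.descFactorial_mul_pow_le_descFactorial_mul_pow hbn k)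
    _ = n.descFactorial k * (n.choose b * b ^ k) := by ring

theorem choose_sub_le_choose_mul_div_pow {k b n : ℕ} (hn : 0 < n) (hkb : k ≤ b) (hbn : b ≤ n) :
    ((n - k).choose (b - k) : ℝ) ≤ n.choose b * ((b : ℝ) / n) ^ k := by
  rw [div_pow, mul_div_assoc', le_div_iff₀ (by positivity)]
  exact_mod_cast Nat.choose_sub_mul_pow_le hkb hbn

theorem choose_sub_left_le_choose_mul_one_sub_div_pow {k b n : ℕ} (hn : 0 < n) (hkn : k ≤ n)
    (hbn : b ≤ n) : ((n - k).choose b : ℝ) ≤ n.choose b * (1 - (b : ℝ) / n) ^ k := by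
  rcases le_or_gt k (n - b) with hk | hk
  · have hcompl : 1 - (b : ℝ) / n = ((n - b : ℕ) : ℝ) / n := by
      rw [Nat.cast_sub hbn]; field_simp
    rw [Nat.choose_symm_of_eq_add (show n - k = b + (n - b - k) by omega), ← Nat.choose_symm hbn,
      hcompl]
    exact choose_sub_le_choose_mul_div_pow hn hk (Nat.sub_le n b)
  · rw [Nat.choose_eq_zero_of_lt (by omega), Nat.cast_zero]
    have hfrac : (b : ℝ) / n ≤ 1 := div_le_one_of_le₀ (by exact_mod_cast hbn) (Nat.cast_nonneg n)
    have hcompl_nonneg : (0 : ℝ) ≤ 1 - b / n := by linarith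
    positivity

theorem Finset.range_min_add_one_eq_filter (a b : ℕ) :
    range (min a b + 1) = (range (a + 1)).filter (· ≤ b) := by
  ext k
  simp only [mem_range, mem_filter]
  omega

namespace Polynomial

variable {R : Type*} [CommSemiring R]

theorem coeff_C_mul_X_pow_mul_X_add_one_pow (c : R) (k N b : ℕ) :
    (C c * (X ^ k * (X + 1) ^ N)).coeff b = c * (if k ≤ b then (N.choose (b - k) : R) else 0) := by
  rw [coeff_C_mul, coeff_X_pow_mul', coeff_X_add_one_pow]

theorem coeff_C_mul_X_add_one_pow_mul (z : R) (a m b : ℕ) :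
    ((C z * X + 1) ^ a * (X + 1) ^ m).coeff b =
      ∑ k ∈ range (a + 1), a.choose k * z ^ k * (if k ≤ b then (m.choose (b - k) : R) else 0) := by
  rw [add_pow, sum_mul, finsetSum_coeff]
  refine sum_congr rfl fun k _ => ?_
  rw [← coeff_C_mul_X_pow_mul_X_add_one_pow]
  congr 1
  simp only [mul_pow, one_pow, C_mul, C_pow, map_natCast]
  ring

theorem coeff_C_mul_X_add_C_mul_X_add_one_pow_mul (u v : R) (a m b : ℕ) :
    ((C u * X + C v * (X + 1)) ^ a * (X + 1) ^ m).coeff b =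
      ∑ k ∈ range (a + 1), a.choose k * u ^ k * v ^ (a - k) *
        (if k ≤ b then ((a - k + m).choose (b - k) : R) else 0) := by
  rw [add_pow, sum_mul, finsetSum_coeff]
  refine sum_congr rfl fun k _ => ?_
  rw [← coeff_C_mul_X_pow_mul_X_add_one_pow]
  congr 1
  simp only [mul_pow, pow_add, C_mul, C_pow, map_natCast]
  ring

theorem coeff_C_add_C_mul_X_add_one_pow_mul (u v : R) (a m b : ℕ) :
    ((C u + C v * (X + 1)) ^ a * (X + 1) ^ m).coeff b =
      ∑ k ∈ range (a + 1), a.choose k * u ^ k * v ^ (a - k) * ((a - k + m).choose b : R) := by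
  rw [add_pow, sum_mul, finsetSum_coeff]
  refine sum_congr rfl fun k _ => ?_
  have hterm : C u ^ k * (C v * (X + 1)) ^ (a - k) * (a.choose k : R[X]) * (X + 1) ^ m =
      C (a.choose k * u ^ k * v ^ (a - k)) * (X + 1) ^ (a - k + m) := by
    simp only [mul_pow, pow_add, C_mul, C_pow, map_natCast]
    ring
  rw [hterm, coeff_C_mul, coeff_X_add_one_pow]

end Polynomial

theorem sum_choose_mul_pow_mul_le_mul_add_pow (a : ℕ) {s t r d : ℝ} (hs : 0 ≤ s) (ht : 0 ≤ t)
    (c : ℕ → ℝ) (hc : ∀ k ≤ a, c k ≤ d * r ^ k) :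
    ∑ k ∈ range (a + 1), a.choose k * s ^ k * t ^ (a - k) * c k ≤ d * (s * r + t) ^ a := by
  rw [add_pow, mul_sum]
  refine sum_le_sum fun k hk => ?_
  have hck := hc k (Nat.lt_succ_iff.mp (mem_range.mp hk))
  calc (a.choose k : ℝ) * s ^ k * t ^ (a - k) * c k
      ≤ a.choose k * s ^ k * t ^ (a - k) * (d * r ^ k) := by gcongr
    _ = d * ((s * r) ^ k * t ^ (a - k) * a.choose k) := by ring

/-- the hypergeometric generating function is bounded by the binomial one. -/
theorem hyp_gf_le_bin_gf (a b n : ℕ) (hn : 1 ≤ n) (ha : a ≤ n) (hb : b ≤ n)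
    (z : ℝ) (hz : 0 < z) :
    ∑ ℓ ∈ Finset.range (min a b + 1),
        ((a.choose ℓ : ℝ) * ((n - a).choose (b - ℓ) : ℝ) / (n.choose b : ℝ)) * z ^ ℓ
      ≤ (1 - (b : ℝ) / n + ((b : ℝ) / n) * z) ^ a := by
  have hchoose : (0 : ℝ) < n.choose b := by exact_mod_cast Nat.choose_pos hb
  have hm : ∀ k ≤ a, a - k + (n - a) = n - k := fun k hk => by omega
  have hLHS : ∑ ℓ ∈ Finset.range (min a b + 1),
        ((a.choose ℓ : ℝ) * ((n - a).choose (b - ℓ) : ℝ) / (n.choose b : ℝ)) * z ^ ℓ =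
      ((C z * X + 1) ^ a * (X + 1) ^ (n - a)).coeff b / n.choose b := by
    rw [coeff_C_mul_X_add_one_pow_mul, sum_div, range_min_add_one_eq_filter, sum_filter]
    refine sum_congr rfl fun k _ => ?_
    split_ifs <;> ring
  rw [hLHS, div_le_iff₀' hchoose]
  rcases le_total 1 z with hz1 | hz1
  · rw [show C z * X + 1 = C (z - 1) * X + C 1 * (X + 1) by simp only [map_sub, map_one]; ring,
      coeff_C_mul_X_add_C_mul_X_add_one_pow_mul]
    calc _ ≤ n.choose b * ((z - 1) * (b / n) + 1) ^ a :=
          sum_choose_mul_pow_mul_le_mul_add_pow a (by linarith) zero_le_one _ fun k hk => by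
            split_ifs with hkb
            · rw [hm k hk]; exact choose_sub_le_choose_mul_div_pow hn hkb hb
            · positivity
      _ = _ := by ring
  · rw [show C z * X + 1 = C (1 - z) + C z * (X + 1) by simp only [map_sub, map_one]; ring,
      coeff_C_add_C_mul_X_add_one_pow_mul]
    calc _ ≤ n.choose b * ((1 - z) * (1 - b / n) + z) ^ a :=
          sum_choose_mul_pow_mul_le_mul_add_pow a (by linarith) hz.le _ fun k hk => by
            rw [hm k hk]; exact choose_sub_left_le_choose_mul_one_sub_div_pow hn (hk.trans ha) hb
      _ = _ := by ring
end

section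
/- For every n ≥ 1 and every real z with 0 ≤ z < 1/n: Σ_{ñ=0}^{n} |S_{n,ñ}|·z^{ñ} ≤ 1 + n²·z²/(1 − n·z). -/
open Finset

/-!
A permutation with `k` non-fixed points is a permutation of some `k`-subset of `[n]`, so there
are at most `n.descFactorial k ≤ n ^ k` of them; moreover none has exactly one non-fixed point.
Hence the generating function is at most `1 + ∑_{k ≥ 2} (n z)^k ≤ 1 + (n z)^2 / (1 - n z)`.
-/

namespace Equiv.Perm

theorem card_filter_card_support_le_descFactorial {α : Type*} [Fintype α] [DecidableEq α]
    (k : ℕ) : #{σ : Perm α | #σ.support = k} ≤ (Fintype.card α).descFactorial k :=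
  calc #{σ : Perm α | #σ.support = k}
      ≤ #((powersetCard k univ).biUnion permsOfFinset) := by
        refine card_le_card fun σ hσ => mem_biUnion.2 ⟨σ.support, ?_, ?_⟩
        · simpa using hσ
        · exact mem_perms_of_finset_iff.2 fun hx => mem_support.2 hx
    _ ≤ ∑ s ∈ powersetCard k univ, #(permsOfFinset s) := card_biUnion_le
    _ = (Fintype.card α).descFactorial k := by
        rw [sum_congr rfl fun s hs => by rw [card_perms_of_finset, (mem_powersetCard.1 hs).2],
          sum_const, card_powersetCard, card_univ, smul_eq_mul,
          Nat.descFactorial_eq_factorial_mul_choose, mul_comm]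

end Equiv.Perm

theorem Snn_eq_filter_card_support (n k : ℕ) :
    Snn n k = ({σ : Equiv.Perm (Fin n) | #σ.support = k} : Finset _) :=
  rfl

theorem card_Snn_le_pow (n k : ℕ) : #(Snn n k) ≤ n ^ k := by
  simpa [Snn_eq_filter_card_support] using
    (Equiv.Perm.card_filter_card_support_le_descFactorial (α := Fin n) k).trans
      (Nat.descFactorial_le_pow _ k)

theorem Snn_zero (n : ℕ) : Snn n 0 = {1} := by
  ext σ
  rw [Snn_eq_filter_card_support]
  simp

theorem Snn_one (n : ℕ) : Snn n 1 = ∅ := by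
  ext σ
  rw [Snn_eq_filter_card_support]
  simp [Equiv.Perm.card_support_ne_one]

theorem perm_gf_bound_general (n : ℕ) (z : ℝ) (hz0 : 0 ≤ z) (hz1 : z < 1 / n) :
    ∑ nt ∈ Finset.range (n + 1), ((Snn n nt).card : ℝ) * z ^ nt
      ≤ 1 + (n : ℝ) ^ 2 * z ^ 2 / (1 - n * z) := by
  have hn : (0 : ℝ) < n := one_div_pos.mp (hz0.trans_lt hz1)
  have hnz : n * z < 1 := by rwa [lt_div_iff₀ hn, mul_comm] at hz1
  have hn1 : 1 ≤ n := by exact_mod_cast hn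
  rw [range_eq_Ico, sum_eq_sum_Ico_succ_bot (by omega), sum_eq_sum_Ico_succ_bot (by omega),
    Snn_zero, Snn_one]
  have htail : ∑ k ∈ Ico 2 (n + 1), (#(Snn n k) : ℝ) * z ^ k ≤ ∑ k ∈ Ico 2 (n + 1), (n * z) ^ k :=
    sum_le_sum fun k _ => by
      rw [mul_pow]
      gcongr
      exact_mod_cast card_Snn_le_pow n k
  calc _ = 1 + ∑ k ∈ Ico 2 (n + 1), (#(Snn n k) : ℝ) * z ^ k := by simp
    _ ≤ 1 + (n * z) ^ 2 / (1 - n * z) := by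
      gcongr
      exact htail.trans (geom_sum_Ico_le_of_lt_one (by positivity) hnz)
    _ = 1 + (n : ℝ) ^ 2 * z ^ 2 / (1 - n * z) := by rw [mul_pow]

/-- the generating function of permutations counted by non-fixed points. -/
theorem perm_gf_bound (n : ℕ) (hn : 1 ≤ n) (z : ℝ) (hz0 : 0 ≤ z) (hz1 : z < 1 / n) :
    ∑ nt ∈ Finset.range (n + 1), ((Snn n nt).card : ℝ) * z ^ nt
      ≤ 1 + (n : ℝ) ^ 2 * z ^ 2 / (1 - n * z) :=
  perm_gf_bound_general n z hz0 hz1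
end

section
/- Let z ≥ 0 be real and let {η_π : π a non-identity permutation of [n]} be a family of events in a probability space. If P[η_π] ≤ z^{ñ} for every ñ and every π ∈ S_{n,ñ} with π ≠ id, then P[⋃_{π ≠ id} η_π] ≤ 3·n²·z². -/
open Finset

/-!
By the union bound it suffices to bound `∑_{π ≠ 1} z ^ #(supp π)`. A permutation with `k`
non-fixed points is a choice of its support followed by a permutation of it, so there are at most
`n.descFactorial k ≤ n ^ k` of them, and `k ≥ 2` unless `π = 1`. Hence the sum is at most
`∑_{k ≥ 2} (n z) ^ k ≤ 3 (n z) ^ 2` once `n z ≤ 2/3`; otherwise `3 n² z² > 1` and the bound is trivial.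
-/

namespace Equiv.Perm

variable {α : Type*} [Fintype α] [DecidableEq α]

theorem card_filter_support_subset (s : Finset α) :
    #{π : Perm α | π.support ⊆ s} = (#s).factorial := by
  rw [← Fintype.card_subtype, ← Fintype.card_coe s, ← Fintype.card_perm]
  refine Fintype.card_congr ((Equiv.subtypeEquivRight fun π => ?_).trans
    (Perm.subtypeEquivSubtypePerm (· ∈ s)).symm)
  simp only [subset_iff, mem_support]
  exact forall_congr' fun a => not_imp_comm

theorem card_filter_card_support_eq_le (k : ℕ) :
    #{π : Perm α | #π.support = k} ≤ Fintype.card α ^ k := by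
  calc #{π : Perm α | #π.support = k}
      = ∑ s ∈ powersetCard k univ, #{π ∈ {π : Perm α | #π.support = k} | π.support = s} :=
        card_eq_sum_card_fiberwise fun π hπ =>
          mem_powersetCard.2 ⟨subset_univ _, (mem_filter.1 hπ).2⟩
    _ ≤ ∑ s ∈ powersetCard k univ, #{π : Perm α | π.support ⊆ s} :=
        sum_le_sum fun s _ => card_le_card fun π hπ =>
          mem_filter.2 ⟨mem_univ _, (mem_filter.1 hπ).2.subset⟩
    _ = ∑ _s ∈ powersetCard k (univ : Finset α), k.factorial :=
        sum_congr rfl fun s hs => by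
          rw [card_filter_support_subset, (mem_powersetCard.1 hs).2]
    _ = (Fintype.card α).descFactorial k := by
        rw [sum_const, card_powersetCard, card_univ, smul_eq_mul,
          Nat.descFactorial_eq_factorial_mul_choose, mul_comm]
    _ ≤ Fintype.card α ^ k := Nat.descFactorial_le_pow _ _

theorem sum_ne_one_pow_card_support_le {z : ℝ} (hz : 0 ≤ z) :
    ∑ π ∈ {π : Perm α | π ≠ 1}, z ^ #π.support
      ≤ ∑ k ∈ Ico 2 (Fintype.card α + 1), ((Fintype.card α : ℝ) * z) ^ k := by
  have hmaps : ∀ π ∈ ({π : Perm α | π ≠ 1} : Finset _),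
      #π.support ∈ Ico 2 (Fintype.card α + 1) := fun π hπ =>
    mem_Ico.2 ⟨one_lt_card_support_of_ne_one (mem_filter.1 hπ).2,
      Nat.lt_succ_of_le (card_le_univ _)⟩
  rw [← sum_fiberwise_of_maps_to hmaps]
  refine sum_le_sum fun k _ => ?_
  calc ∑ π ∈ {π ∈ {π : Perm α | π ≠ 1} | #π.support = k}, z ^ #π.support
      = #{π ∈ {π : Perm α | π ≠ 1} | #π.support = k} * z ^ k := by
        rw [sum_congr rfl fun π hπ => by rw [(mem_filter.1 hπ).2], sum_const, nsmul_eq_mul]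
    _ ≤ (Fintype.card α : ℝ) ^ k * z ^ k := by
        gcongr
        exact_mod_cast (card_le_card (filter_subset_filter _ (filter_subset _ _))).trans
          (card_filter_card_support_eq_le k)
    _ = ((Fintype.card α : ℝ) * z) ^ k := (mul_pow _ _ _).symm

end Equiv.Perm

theorem sum_Ico_two_pow_le_three_mul_sq {K : Type*} [Field K] [LinearOrder K]
    [IsStrictOrderedRing K] {r : K} (hr₀ : 0 ≤ r) (hr : r ≤ 2 / 3) (m : ℕ) :
    ∑ k ∈ Ico 2 m, r ^ k ≤ 3 * r ^ 2 :=
  calc ∑ k ∈ Ico 2 m, r ^ k ≤ r ^ 2 / (1 - r) := geom_sum_Ico_le_of_lt_one hr₀ (by linarith)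
    _ ≤ 3 * r ^ 2 := by
      rw [div_le_iff₀ (by linarith)]
      nlinarith [sq_nonneg r]

theorem MeasureTheory.measure_biUnion_finset_le_ofReal_sum {Ω ι : Type*}
    [MeasurableSpace Ω] {μ : Measure Ω} (I : Finset ι) {s : ι → Set Ω} {f : ι → ℝ}
    (hf : ∀ i ∈ I, 0 ≤ f i) (hs : ∀ i ∈ I, μ (s i) ≤ ENNReal.ofReal (f i)) :
    μ (⋃ i ∈ I, s i) ≤ ENNReal.ofReal (∑ i ∈ I, f i) :=
  calc μ (⋃ i ∈ I, s i) ≤ ∑ i ∈ I, μ (s i) := measure_biUnion_finset_le I s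
    _ ≤ ∑ i ∈ I, ENNReal.ofReal (f i) := sum_le_sum hs
    _ = ENNReal.ofReal (∑ i ∈ I, f i) := (ENNReal.ofReal_sum_of_nonneg hf).symm

/-- the union bound over non-identity permutations. -/
theorem union_bound_perms {Ω : Type*} [MeasurableSpace Ω]
    (μ : MeasureTheory.Measure Ω) [MeasureTheory.IsProbabilityMeasure μ]
    (n : ℕ) (z : ℝ) (hz : 0 ≤ z)
    (η : Equiv.Perm (Fin n) → Set Ω)
    (h : ∀ nt : ℕ, ∀ π ∈ Snn n nt, π ≠ 1 → μ (η π) ≤ ENNReal.ofReal (z ^ nt)) :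
    μ (⋃ π ∈ {π : Equiv.Perm (Fin n) | π ≠ 1}, η π)
      ≤ ENNReal.ofReal (3 * (n : ℝ) ^ 2 * z ^ 2) := by
  rcases le_or_gt ((n : ℝ) * z) (2 / 3) with hsmall | hlarge
  · have hunion : (⋃ π ∈ {π : Equiv.Perm (Fin n) | π ≠ 1}, η π)
        = ⋃ π ∈ ({π | π ≠ 1} : Finset (Equiv.Perm (Fin n))), η π := by
      ext; simp
    rw [hunion]
    refine (MeasureTheory.measure_biUnion_finset_le_ofReal_sum _ (fun π _ => pow_nonneg hz _)
      fun π hπ => h _ π (mem_filter.2 ⟨mem_univ _, rfl⟩) (mem_filter.1 hπ).2).trans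
      (ENNReal.ofReal_le_ofReal ?_)
    calc ∑ π ∈ ({π | π ≠ 1} : Finset (Equiv.Perm (Fin n))), z ^ #π.support
        ≤ ∑ k ∈ Ico 2 (n + 1), ((n : ℝ) * z) ^ k := by
          simpa using Equiv.Perm.sum_ne_one_pow_card_support_le (α := Fin n) hz
      _ ≤ 3 * ((n : ℝ) * z) ^ 2 :=
          sum_Ico_two_pow_le_three_mul_sq (by positivity) hsmall _
      _ = 3 * (n : ℝ) ^ 2 * z ^ 2 := by ring
  · calc μ (⋃ π ∈ {π : Equiv.Perm (Fin n) | π ≠ 1}, η π) ≤ 1 := MeasureTheory.prob_le_one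
      _ ≤ ENNReal.ofReal (3 * (n : ℝ) ^ 2 * z ^ 2) := by
          rw [← ENNReal.ofReal_one]
          exact ENNReal.ofReal_le_ofReal (by nlinarith)
end

section
/- For each n, let (G_a, G_b) ~ ER(n, p(n)), let t = n(n−1)/2, let M be the number of vertex pairs e with (G_a(e), G_b(e)) = (1,1) (so M has a Binomial(t, p11(n)) distribution), and let E_n be an event. Suppose there are sequences z9(n) ≥ 1 and z8(n) ∈ (0,1) and a constant ε > 0 such that P[E_n | M = m] ≤ z9(n)·z8(n)^m for all m ≤ (1+ε)·t·p11(n), and t·p11(n)·(1 − z8(n)) − log z9(n) → ∞ as n → ∞. Then P[E_n] → 0. -/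
open Finset

/-- The number of vertex pairs carrying the label `(1,1)`, i.e. `|E(G_a ∧ G_b)|`. -/
def Mcount {n : ℕ} (gab : LGraph n × LGraph n) : ℕ :=
  (Finset.univ.filter fun e : VPairs n => gab.1 e = true ∧ gab.2 e = true).card

/-!
Split `P[E_n] = ∑ₘ P[E_n ∧ M = m]` at `θ = (1 + ε) t p₁₁`. Below `θ` the hypothesis bounds
the sum by `z₉ 𝔼[z₈^M] = z₉ (1 - (1 - z₈) p₁₁)^t ≤ z₉ exp(-t p₁₁ (1 - z₈))`; above `θ` the
Chernoff bound `P[M > θ] ≤ (1 + ε)^(-θ) 𝔼[(1 + ε)^M] ≤ exp(-((1 + ε) log(1 + ε) - ε) t p₁₁)`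
applies. Both tend to `0`, since `t p₁₁ ≥ t p₁₁ (1 - z₈) - log z₉ → ∞`.
-/

open Filter Real

theorem sum_prod_pair_eq_pow {R S : Type*} [CommSemiring R] [Fintype S] [DecidableEq S]
    (q : Bool → Bool → R) :
    ∑ gab : (S → Bool) × (S → Bool), ∏ e, q (gab.1 e) (gab.2 e)
      = (q true true + q true false + q false true + q false false) ^ Fintype.card S := by
  rw [← (Equiv.arrowProdEquivProdArrow S (fun _ => Bool) (fun _ => Bool)).sum_comp]
  change ∑ h : S → Bool × Bool, ∏ e, q (h e).1 (h e).2 = _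
  rw [← Fintype.prod_sum (fun _ (x : Bool × Bool) => q x.1 x.2), Finset.prod_const,
    Fintype.sum_prod_type]
  simp only [Fintype.sum_bool, Finset.card_univ, add_assoc]

theorem card_VPairs (n : ℕ) : (Fintype.card (VPairs n) : ℝ) = n * (n - 1) / 2 := by
  rw [Sym2.card_subtype_not_diag, Fintype.card_fin, Nat.cast_choose_two]

theorem pv_nonneg {a b c d : ℝ} (ha : 0 ≤ a) (hb : 0 ≤ b) (hc : 0 ≤ c) (hd : 0 ≤ d)
    (i j : Bool) : 0 ≤ pv a b c d i j := by
  cases i <;> cases j <;> assumption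

section ERprob

variable {n : ℕ} {p : Bool → Bool → ℝ}

theorem ERprob_nonneg (hp : ∀ i j, 0 ≤ p i j) (E : LGraph n × LGraph n → Prop) :
    0 ≤ ERprob n p E := by
  classical
  exact Finset.sum_nonneg fun gab _ =>
    mul_nonneg (by split_ifs <;> norm_num) (Finset.prod_nonneg fun e _ => hp _ _)

theorem ERprob_mono (hp : ∀ i j, 0 ≤ p i j) {E F : LGraph n × LGraph n → Prop}
    (hEF : ∀ gab, E gab → F gab) : ERprob n p E ≤ ERprob n p F := by
  classical
  refine Finset.sum_le_sum fun gab _ =>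
    mul_le_mul_of_nonneg_right ?_ (Finset.prod_nonneg fun e _ => hp _ _)
  by_cases hE : E gab
  · simp [hE, hEF gab hE]
  · simp only [hE, if_false]
    split_ifs <;> norm_num

theorem Mcount_le_card (gab : LGraph n × LGraph n) : Mcount gab ≤ Fintype.card (VPairs n) :=
  Finset.card_le_univ _

open Classical in
theorem sum_mul_ERprob_and_Mcount_eq (E : LGraph n × LGraph n → Prop)
    (f : ℕ → ℝ) :
    ∑ m ∈ range (Fintype.card (VPairs n) + 1),
        f m * ERprob n p (fun gab => E gab ∧ Mcount gab = m)
      = ∑ gab : LGraph n × LGraph n,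
          (if E gab then f (Mcount gab) else 0) * ∏ e, p (gab.1 e) (gab.2 e) := by
  simp only [ERprob, Finset.mul_sum]
  rw [Finset.sum_comm]
  refine Finset.sum_congr rfl fun gab _ => ?_
  have hM : Mcount gab ∈ range (Fintype.card (VPairs n) + 1) :=
    Finset.mem_range.mpr (Nat.lt_succ_of_le (Mcount_le_card gab))
  by_cases hE : E gab
  · simp only [hE, if_true, true_and, ite_mul, one_mul, zero_mul, mul_ite, mul_zero]
    rw [Finset.sum_ite_eq, if_pos hM]
  · simp [hE]

theorem ERprob_eq_sum_ERprob_and_Mcount_eq (E : LGraph n × LGraph n → Prop) :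
    ERprob n p E = ∑ m ∈ range (Fintype.card (VPairs n) + 1),
      ERprob n p (fun gab => E gab ∧ Mcount gab = m) := by
  simpa [ERprob] using (sum_mul_ERprob_and_Mcount_eq (p := p) E (fun _ => 1)).symm

theorem sum_pow_mul_ERprob_Mcount_eq (z : ℝ) :
    ∑ m ∈ range (Fintype.card (VPairs n) + 1),
        z ^ m * ERprob n p (fun gab => Mcount gab = m)
      = (z * p true true + p true false + p false true + p false false)
          ^ Fintype.card (VPairs n) := by
  have hweight : ∀ gab : LGraph n × LGraph n,
      z ^ Mcount gab * ∏ e, p (gab.1 e) (gab.2 e)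
        = ∏ e, (if gab.1 e = true ∧ gab.2 e = true then z else 1) * p (gab.1 e) (gab.2 e) := by
    intro gab
    rw [Finset.prod_mul_distrib, Finset.prod_ite, Finset.prod_const, Finset.prod_const, one_pow,
      mul_one]
    rfl
  have := sum_mul_ERprob_and_Mcount_eq (p := p) (fun (_ : LGraph n × LGraph n) => True) (z ^ ·)
  simp only [true_and, if_true] at this
  rw [this, Finset.sum_congr rfl fun gab _ => hweight gab,
    sum_prod_pair_eq_pow fun i j => (if i = true ∧ j = true then z else 1) * p i j]
  simp

end ERprob

theorem sum_le_mul_sum_pow_add_rpow_neg_mul_sum_pow {s : Finset ℕ} {f g : ℕ → ℝ}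
    {C z r θ : ℝ} (hC : 0 ≤ C) (hz : 0 ≤ z) (hr : 1 ≤ r) (hg : ∀ m ∈ s, 0 ≤ g m)
    (hfg : ∀ m ∈ s, f m ≤ g m)
    (hsmall : ∀ m ∈ s, (m : ℝ) ≤ θ → f m ≤ C * z ^ m * g m) :
    ∑ m ∈ s, f m ≤ C * ∑ m ∈ s, z ^ m * g m + r ^ (-θ) * ∑ m ∈ s, r ^ m * g m := by
  rw [Finset.mul_sum, Finset.mul_sum, ← Finset.sum_add_distrib]
  refine Finset.sum_le_sum fun m hm => ?_
  have hsmall_nonneg : 0 ≤ C * (z ^ m * g m) := by have := hg m hm; positivity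
  have hlarge_nonneg : 0 ≤ r ^ (-θ) * (r ^ m * g m) := by have := hg m hm; positivity
  rcases le_or_gt (m : ℝ) θ with hmθ | hθm
  · linarith [hsmall m hm hmθ]
  · have hcoef : 1 ≤ r ^ (-θ) * r ^ m := by
      rw [← rpow_natCast, ← rpow_add (by linarith)]
      exact one_le_rpow hr (by linarith)
    nlinarith [hfg m hm, hg m hm]

theorem pow_le_exp_mul_sub_one {x : ℝ} (hx : 0 ≤ x) (t : ℕ) :
    x ^ t ≤ exp (t * (x - 1)) := by
  rw [exp_nat_mul]
  exact pow_le_pow_left₀ hx (by linarith [add_one_le_exp (x - 1)]) t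

theorem ERprob_le_exp_add_exp {n : ℕ} {a b c d : ℝ} (ha : 0 ≤ a) (hb : 0 ≤ b) (hc : 0 ≤ c)
    (hd : 0 ≤ d) (hs : a + b + c + d = 1) {E : LGraph n × LGraph n → Prop} {z8 z9 ε : ℝ}
    (hz9 : 0 < z9) (hz8 : 0 ≤ z8) (hε : 0 ≤ ε)
    (hcond : ∀ m : ℕ, (m : ℝ) ≤ (1 + ε) * ((n : ℝ) * ((n : ℝ) - 1) / 2) * a →
      ERprob n (pv a b c d) (fun gab => E gab ∧ Mcount gab = m) /
        ERprob n (pv a b c d) (fun gab => Mcount gab = m) ≤ z9 * z8 ^ m) :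
    ERprob n (pv a b c d) E ≤
      exp (log z9 - ((n : ℝ) * ((n : ℝ) - 1) / 2) * a * (1 - z8))
      + exp (-(((1 + ε) * log (1 + ε) - ε) * (((n : ℝ) * ((n : ℝ) - 1) / 2) * a))) := by
  have hp := pv_nonneg ha hb hc hd
  set t := Fintype.card (VPairs n)
  rw [← card_VPairs]
  have hsmall : ∀ m ∈ range (t + 1), (m : ℝ) ≤ (1 + ε) * t * a →
      ERprob n (pv a b c d) (fun gab => E gab ∧ Mcount gab = m)
        ≤ z9 * z8 ^ m * ERprob n (pv a b c d) (fun gab => Mcount gab = m) := by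
    intro m _ hm
    -- where `P[M = m] = 0` the quotient is the junk value `0`, but then `P[E ∧ M = m] = 0`
    rcases (ERprob_nonneg hp (fun gab => Mcount gab = m)).eq_or_lt with hzero | hpos
    · rw [← hzero, mul_zero]
      exact hzero ▸ ERprob_mono hp fun gab h => h.2
    · exact (div_le_iff₀ hpos).mp (hcond m (card_VPairs n ▸ hm))
  calc ERprob n (pv a b c d) E
      = ∑ m ∈ range (t + 1), ERprob n (pv a b c d) (fun gab => E gab ∧ Mcount gab = m) :=
        ERprob_eq_sum_ERprob_and_Mcount_eq E
    _ ≤ z9 * ∑ m ∈ range (t + 1), z8 ^ m * ERprob n (pv a b c d) (Mcount · = m)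
          + (1 + ε) ^ (-((1 + ε) * t * a))
            * ∑ m ∈ range (t + 1), (1 + ε) ^ m * ERprob n (pv a b c d) (Mcount · = m) :=
        sum_le_mul_sum_pow_add_rpow_neg_mul_sum_pow hz9.le hz8 (by linarith)
          (fun m _ => ERprob_nonneg hp _) (fun m _ => ERprob_mono hp fun gab h => h.2) hsmall
    _ = z9 * (z8 * a + b + c + d) ^ t
          + (1 + ε) ^ (-((1 + ε) * t * a)) * ((1 + ε) * a + b + c + d) ^ t := by
        rw [sum_pow_mul_ERprob_Mcount_eq, sum_pow_mul_ERprob_Mcount_eq]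
        rfl
    _ ≤ z9 * exp (t * ((z8 * a + b + c + d) - 1))
          + (1 + ε) ^ (-((1 + ε) * t * a)) * exp (t * (((1 + ε) * a + b + c + d) - 1)) := by
        gcongr <;> exact pow_le_exp_mul_sub_one (by positivity) t
    _ = _ := by
        rw [rpow_def_of_pos (by linarith), ← exp_log hz9, ← exp_add, ← exp_add, exp_log hz9]
        congr 2 <;> linear_combination (t : ℝ) * hs

/-- the averaging lemma over the distribution of `M` (Lemma 12). -/
theorem averaging_over_M
    (p11 p10 p01 p00 : ℕ → ℝ)
    (hpos : ∀ n, 0 ≤ p11 n ∧ 0 ≤ p10 n ∧ 0 ≤ p01 n ∧ 0 ≤ p00 n)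
    (hsum : ∀ n, p11 n + p10 n + p01 n + p00 n = 1)
    (E : (n : ℕ) → LGraph n × LGraph n → Prop)
    (z8 z9 : ℕ → ℝ)
    (hz9 : ∀ n, 1 ≤ z9 n)
    (hz8 : ∀ n, 0 < z8 n ∧ z8 n < 1)
    (ε : ℝ) (hε : 0 < ε)
    (hcond : ∀ n : ℕ, ∀ m : ℕ,
      (m : ℝ) ≤ (1 + ε) * ((n : ℝ) * ((n : ℝ) - 1) / 2) * p11 n →
      ERprob n (pv (p11 n) (p10 n) (p01 n) (p00 n))
          (fun gab => E n gab ∧ Mcount gab = m)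
        / ERprob n (pv (p11 n) (p10 n) (p01 n) (p00 n)) (fun gab => Mcount gab = m)
      ≤ z9 n * z8 n ^ m)
    (hlim : Filter.Tendsto
      (fun n : ℕ => ((n : ℝ) * ((n : ℝ) - 1) / 2) * p11 n * (1 - z8 n) - Real.log (z9 n))
      Filter.atTop Filter.atTop) :
    Filter.Tendsto
      (fun n : ℕ => ERprob n (pv (p11 n) (p10 n) (p01 n) (p00 n)) (E n))
      Filter.atTop (nhds 0) := by
  have hrate : 0 < (1 + ε) * log (1 + ε) - ε := by
    linarith [self_sub_one_lt_mul_log (x := 1 + ε) (by linarith) (by linarith)]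
  have hmean : Tendsto (fun n : ℕ => ((n : ℝ) * ((n : ℝ) - 1) / 2) * p11 n) atTop atTop := by
    refine tendsto_atTop_mono (fun n => ?_) hlim
    have hmean_nonneg : 0 ≤ ((n : ℝ) * ((n : ℝ) - 1) / 2) * p11 n :=
      card_VPairs n ▸ mul_nonneg (Nat.cast_nonneg _) (hpos n).1
    nlinarith [log_nonneg (hz9 n), (hz8 n).1]
  have hbound := fun n => ERprob_le_exp_add_exp (hpos n).1 (hpos n).2.1 (hpos n).2.2.1
    (hpos n).2.2.2 (hsum n) (zero_lt_one.trans_le (hz9 n)) (hz8 n).1.le hε.le (hcond n)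
  have hp := fun n => pv_nonneg (hpos n).1 (hpos n).2.1 (hpos n).2.2.1 (hpos n).2.2.2
  refine squeeze_zero (fun n => ERprob_nonneg (hp n) (E n)) hbound ?_
  have hsmall := tendsto_exp_atBot.comp (tendsto_neg_atTop_atBot.comp hlim)
  have hlarge := tendsto_exp_atBot.comp
    (tendsto_neg_atTop_atBot.comp (hmean.const_mul_atTop hrate))
  simpa [Function.comp_def, neg_sub] using hsmall.add hlarge
end
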